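/- Let G be a weighted undirected graph, let s1, s2 be vertices, and let R = (z_0 = s1, …, z_k = v) be a shortest path from s1 to v. Suppose dist(s1,s1) < dist(s2,s1) and dist(s2,v) < dist(s1,v). Then there exists an index m, 0 < m ≤ k, such that dist(s1,z_i) < dist(s2,z_i) for all i < m and dist(s2,z_i) < dist(s1,z_i) for all i ≥ m, provided dist(s1,z_i) ≠ dist(s2,z_i) for all i. -/

import Mathlib

/-!
Write `z_i` for the vertices of the shortest path. Since every prefix of a shortest path is
shortest, `dist s1 z_{i+1} = dist s1 z_i + w(z_i z_{i+1})`, while the triangle inequality gives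
`dist s2 z_{i+1} ≤ dist s2 z_i + w(z_i z_{i+1})`. Hence `dist s2 z_i - dist s1 z_i` is
antitone along the path: it is positive at `z_0 = s1` and negative at `z_k = v`, and, having no
zeros, changes sign exactly once.
-/

def walkWeight {V : Type} {G : SimpleGraph V} (w : Sym2 V → ℝ) {a b : V} (p : G.Walk a b) : ℝ :=
  (p.edges.map w).sum

open SimpleGraph

section WalkWeight

variable {V : Type} {G : SimpleGraph V} {w : Sym2 V → ℝ}

@[simp]
lemma walkWeight_nil {a : V} : walkWeight w (Walk.nil : G.Walk a a) = 0 := rfl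

@[simp]
lemma walkWeight_cons {a b c : V} (h : G.Adj a b) (q : G.Walk b c) :
    walkWeight w (Walk.cons h q) = w s(a, b) + walkWeight w q := by
  simp [walkWeight]

@[simp]
lemma walkWeight_append {a b c : V} (p : G.Walk a b) (q : G.Walk b c) :
    walkWeight w (p.append q) = walkWeight w p + walkWeight w q := by
  simp [walkWeight]

end WalkWeight

section ShortestPaths

variable {V : Type} {G : SimpleGraph V} {w : Sym2 V → ℝ} {dist : V → V → ℝ}

lemma dist_le_walkWeight
    (hdist : ∀ a b : V, IsLeast {x : ℝ | ∃ p : G.Walk a b, walkWeight w p = x} (dist a b))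
    {a b : V} (p : G.Walk a b) : dist a b ≤ walkWeight w p :=
  (hdist a b).2 ⟨p, rfl⟩

lemma dist_le_dist_add_walkWeight
    (hdist : ∀ a b : V, IsLeast {x : ℝ | ∃ p : G.Walk a b, walkWeight w p = x} (dist a b))
    (s : V) {b c : V} (q : G.Walk b c) : dist s c ≤ dist s b + walkWeight w q := by
  obtain ⟨r, hr⟩ := (hdist s b).1
  simpa [hr] using dist_le_walkWeight hdist (r.append q)

/-- The hypothesis on `p` says that `p` is the tail of a shortest walk from `s1`. -/
lemma antitone_dist_sub_dist_getVert
    (hdist : ∀ a b : V, IsLeast {x : ℝ | ∃ p : G.Walk a b, walkWeight w p = x} (dist a b))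
    (s1 s2 : V) {a v : V} (p : G.Walk a v) (hp : dist s1 a + walkWeight w p ≤ dist s1 v) :
    Antitone fun i ↦ dist s2 (p.getVert i) - dist s1 (p.getVert i) := by
  induction p with
  | nil => exact fun _ _ _ ↦ by simp
  | @cons a b c hab q ih =>
    rw [walkWeight_cons] at hp
    have hb : dist s1 b ≤ dist s1 a + w s(a, b) := by
      simpa using dist_le_dist_add_walkWeight hdist s1 (Walk.cons hab Walk.nil)
    have hc : dist s1 c ≤ dist s1 b + walkWeight w q := dist_le_dist_add_walkWeight hdist s1 q
    have hb₂ : dist s2 b ≤ dist s2 a + w s(a, b) := by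
      simpa using dist_le_dist_add_walkWeight hdist s2 (Walk.cons hab Walk.nil)
    have htail := ih (by linarith)
    refine antitone_nat_of_succ_le fun n ↦ ?_
    cases n with
    | zero =>
      simp only [Walk.getVert_cons_succ, Walk.getVert_zero]
      linarith
    | succ n => simpa only [Walk.getVert_cons_succ] using htail n.le_succ

end ShortestPaths

theorem stmt5_general {V : Type} (G : SimpleGraph V) (w : Sym2 V → ℝ)
    (dist : V → V → ℝ)
    (hdist : ∀ a b : V, IsLeast {x : ℝ | ∃ p : G.Walk a b, walkWeight w p = x} (dist a b))
    (s1 s2 v : V) (p : G.Walk s1 v) (hp : walkWeight w p = dist s1 v)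
    (h1 : dist s1 s1 < dist s2 s1) (h2 : dist s2 v < dist s1 v)
    (hties : ∀ z ∈ p.support, dist s1 z ≠ dist s2 z) :
    ∃ m : ℕ, 0 < m ∧ m ≤ p.length ∧
      (∀ i : ℕ, ∀ h : i < p.support.length, i < m →
        dist s1 (p.support.get ⟨i, h⟩) < dist s2 (p.support.get ⟨i, h⟩)) ∧
      (∀ i : ℕ, ∀ h : i < p.support.length, m ≤ i →
        dist s2 (p.support.get ⟨i, h⟩) < dist s1 (p.support.get ⟨i, h⟩)) := by
  have hself : dist s1 s1 ≤ 0 := by simpa using dist_le_walkWeight hdist (Walk.nil : G.Walk s1 s1)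
  have hanti := antitone_dist_sub_dist_getVert hdist s1 s2 p (by linarith)
  have hend : dist s2 (p.getVert p.length) < dist s1 (p.getVert p.length) := by simpa using h2
  have hswitch : ∃ i, dist s2 (p.getVert i) < dist s1 (p.getVert i) := ⟨_, hend⟩
  refine ⟨Nat.find hswitch, Nat.pos_of_ne_zero fun h0 ↦ ?_, Nat.find_min' hswitch hend,
    fun i _ hi ↦ ?_, fun i _ hi ↦ ?_⟩
  · have := Nat.find_spec hswitch
    rw [h0, Walk.getVert_zero] at this
    linarith
  · simp only [List.get_eq_getElem, Walk.support_getElem_eq_getVert]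
    exact (not_lt.mp (Nat.find_min hswitch hi)).lt_of_ne (hties _ (p.getVert_mem_support i))
  · simp only [List.get_eq_getElem, Walk.support_getElem_eq_getVert]
    linarith [hanti hi, Nat.find_spec hswitch]

/-- Along a shortest path `(z_0 = s1, …, z_k = v)` with `s1` strictly closer to itself and
`s2` strictly closer to `v`, and no ties along the path, there is a single switch index `m`:
before `m` the vertices are strictly closer to `s1`, from `m` on strictly closer to `s2`. -/
theorem stmt5 {V : Type} (G : SimpleGraph V) (w : Sym2 V → ℝ)
    (hw : ∀ e, 0 ≤ w e)
    (dist : V → V → ℝ)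
    (hdist : ∀ a b : V, IsLeast {x : ℝ | ∃ p : G.Walk a b, walkWeight w p = x} (dist a b))
    (s1 s2 v : V) (p : G.Walk s1 v) (hp : walkWeight w p = dist s1 v)
    (h1 : dist s1 s1 < dist s2 s1) (h2 : dist s2 v < dist s1 v)
    (hties : ∀ z ∈ p.support, dist s1 z ≠ dist s2 z) :
    ∃ m : ℕ, 0 < m ∧ m ≤ p.length ∧
      (∀ i : ℕ, ∀ h : i < p.support.length, i < m →
        dist s1 (p.support.get ⟨i, h⟩) < dist s2 (p.support.get ⟨i, h⟩)) ∧
      (∀ i : ℕ, ∀ h : i < p.support.length, m ≤ i →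
        dist s2 (p.support.get ⟨i, h⟩) < dist s1 (p.support.get ⟨i, h⟩)) :=
  stmt5_general G w dist hdist s1 s2 v p hp h1 h2 hties
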